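/- If a search T of a PTS S has not found a violation of an LTL+ formula φ, then the measure of the fully explored execution paths of the minimal extension is a lower bound on the progress: μ_{S_T}(T^ω ∩ Exec_{S_T}) ≤ prog_S(T, φ). -/

import Mathlib

open MeasureTheory

/- ## LTL⁺ syntax and semantics -/

inductive LTLPlus (AP : Type) : Type where
  | tt : LTLPlus AP
  | ff : LTLPlus AP
  | atom : AP → LTLPlus AP
  | and : LTLPlus AP → LTLPlus AP → LTLPlus AP
  | or : LTLPlus AP → LTLPlus AP → LTLPlus AP
  | next : LTLPlus AP → LTLPlus AP
  | untl : LTLPlus AP → LTLPlus AP → LTLPlus AP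
  | release : LTLPlus AP → LTLPlus AP → LTLPlus AP

variable {AP : Type}

/-- The suffix `ρ[k…]` of an infinite word. -/
def shift (ρ : ℕ → Set AP) (k : ℕ) : ℕ → Set AP := fun n => ρ (n + k)

/-- Standard LTL satisfaction for the positive fragment. -/
def LTLSat : LTLPlus AP → (ℕ → Set AP) → Prop
  | .tt, _ => True
  | .ff, _ => False
  | .atom a, ρ => a ∈ ρ 0
  | .and φ ψ, ρ => LTLSat φ ρ ∧ LTLSat ψ ρ
  | .or φ ψ, ρ => LTLSat φ ρ ∨ LTLSat ψ ρ
  | .next φ, ρ => LTLSat φ (shift ρ 1)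
  | .untl φ ψ, ρ => ∃ j, LTLSat ψ (shift ρ j) ∧ ∀ i < j, LTLSat φ (shift ρ i)
  | .release φ ψ, ρ => ∀ j, LTLSat ψ (shift ρ j) ∨ ∃ i < j, LTLSat φ (shift ρ i)

/-- Concatenation `σρ` of a finite word with an infinite word. -/
def wcat (σ : List (Set AP)) (ρ : ℕ → Set AP) : ℕ → Set AP :=
  fun n => if h : n < σ.length then σ.get ⟨n, h⟩ else ρ (n - σ.length)

/- ## Probabilistic transition systems -/

variable {State Tr : Type}

structure PTS (State Tr AP : Type) where
  states : Set State
  transitions : Set Tr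
  countable_states : states.Countable
  countable_transitions : transitions.Countable
  init : State
  init_mem : init ∈ states
  source : Tr → State
  target : Tr → State
  prob : Tr → ℝ
  label : State → Set AP
  source_mem : ∀ t ∈ transitions, source t ∈ states
  target_mem : ∀ t ∈ transitions, target t ∈ states
  prob_pos : ∀ t ∈ transitions, 0 < prob t
  prob_le_one : ∀ t ∈ transitions, prob t ≤ 1
  prob_sum : ∀ s ∈ states,
    (∑' t : { t : Tr // t ∈ transitions ∧ source t = s }, prob t.1) = 1

/-- An execution path: an infinite sequence of transitions starting at the
initial state, with matching targets and sources. -/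
def PTS.IsExec (S : PTS State Tr AP) (e : ℕ → Tr) : Prop :=
  (∀ i, e i ∈ S.transitions) ∧ S.source (e 0) = S.init ∧
    ∀ i, S.target (e i) = S.source (e (i + 1))

/-- The finite sequence `l` is a prefix of the infinite sequence `e`. -/
def IsPrefixOf (l : List Tr) (e : ℕ → Tr) : Prop :=
  ∀ i : ℕ, ∀ h : i < l.length, l.get ⟨i, h⟩ = e i

/-- `l` is a finite prefix of some execution path of `S`, i.e. `l ∈ pref(Exec_S)`. -/
def PTS.IsPrefExec (S : PTS State Tr AP) (l : List Tr) : Prop :=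
  ∃ e, S.IsExec e ∧ IsPrefixOf l e

/-- The basic cylinder set `B_S^l` of a finite sequence of transitions. -/
def PTS.Cyl (S : PTS State Tr AP) (l : List Tr) : Set (ℕ → Tr) :=
  { e | S.IsExec e ∧ IsPrefixOf l e }

/-- `S'` extends the search `T` of `S`. -/
def PTS.Extends (S' S : PTS State Tr AP) (T : Finset Tr) : Prop :=
  (∀ t ∈ T, t ∈ S'.transitions) ∧ S'.init = S.init ∧
    ∀ t ∈ T, S'.source t = S.source t ∧ S'.target t = S.target t ∧
      S'.prob t = S.prob t ∧
      S'.label (S'.source t) = S.label (S.source t) ∧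
      S'.label (S'.target t) = S.label (S.target t)

/-- The trace of an execution path. -/
def PTS.traceOf (S : PTS State Tr AP) (e : ℕ → Tr) : ℕ → Set AP :=
  fun i => S.label (S.source (e i))

/-- Satisfaction `e ⊨_S φ` of a linear-time property (a set of infinite words). -/
def PTS.SatPath (S : PTS State Tr AP) (e : ℕ → Tr) (φ : Set (ℕ → Set AP)) : Prop :=
  S.traceOf e ∈ φ

instance : MeasurableSpace (ℕ → Tr) := ⊤

/-- `μ` behaves as the cylinder measure of the PTS `S`:
`μ(B_S^{t₁…tₙ}) = Π prob(tᵢ)`. -/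
def CylSpec (S : PTS State Tr AP) (μ : Measure (ℕ → Tr)) : Prop :=
  ∀ l : List Tr, S.IsPrefExec l →
    μ (S.Cyl l) = ENNReal.ofReal ((l.map S.prob).prod)

/-- The set `B_S^φ(T)`: union of the basic cylinder sets over `e ∈ T*` all of
whose execution paths satisfy `φ`. -/
def PTS.BPhi (S : PTS State Tr AP) (T : Finset Tr) (φ : Set (ℕ → Set AP)) :
    Set (ℕ → Tr) :=
  ⋃ l ∈ { l : List Tr | (∀ t ∈ l, t ∈ T) ∧ ∀ e ∈ S.Cyl l, S.SatPath e φ }, S.Cyl l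

/-- The set `E_S^φ(T)`. -/
def PTS.ESet (S : PTS State Tr AP) (T : Finset Tr) (φ : Set (ℕ → Set AP)) :
    Set (List Tr) :=
  { l | (∀ t ∈ l, t ∈ T) ∧ S.IsPrefExec l ∧ ∀ e ∈ S.Cyl l, S.SatPath e φ }

/-- The set `ME_S^φ(T)` of prefix-minimal elements of `E_S^φ(T)`. -/
def PTS.MESet (S : PTS State Tr AP) (T : Finset Tr) (φ : Set (ℕ → Set AP)) :
    Set (List Tr) :=
  { l ∈ S.ESet T φ | 0 < l.length → ∃ e ∈ S.Cyl l.dropLast, ¬ S.SatPath e φ }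

/-- The progress measure, relative to an assignment `M` of (cylinder) measures
to PTSs: the infimum over all extensions `S'` of `T` of `μ_{S'}(B_{S'}^φ(T))`. -/
noncomputable def progM (M : PTS State Tr AP → Measure (ℕ → Tr))
    (S : PTS State Tr AP) (T : Finset Tr) (φ : Set (ℕ → Set AP)) : ENNReal :=
  ⨅ S' : { S' : PTS State Tr AP // S'.Extends S T }, M S'.1 ((S'.1).BPhi T φ)

/-- The search `T` of `S` has not found a violation of `φ`. -/
def NotFoundViolation (S : PTS State Tr AP) (T : Finset Tr)
    (φ : Set (ℕ → Set AP)) : Prop :=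
  ∃ S' : PTS State Tr AP, S'.Extends S T ∧ ∀ e, S'.IsExec e → S'.SatPath e φ

/- ## The minimal extension S_T -/

open Classical in
/-- `out_S(s)`: total explored outgoing probability of `s`. -/
noncomputable def outP (S : PTS State Tr AP) (T : Finset Tr) (s : State) : ℝ :=
  ∑ t ∈ T.filter (fun t => S.source t = s), S.prob t

/-- The set `S^T_S` of explored states. -/
def STStates (S : PTS State Tr AP) (T : Finset Tr) : Set State :=
  S.source '' ↑T ∪ S.target '' ↑T ∪ {S.init}

/-- `ST` is (a copy of) the minimal extension `S_T` of the search `T` of `S`: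
it has the explored states plus a fresh sink state `s⊥` with empty label and a
probability-one self loop `t⊥`, the explored transitions with unchanged data,
and, for each explored state with explored outgoing probability less than one,
a fresh transition to the sink carrying the residual probability. -/
def IsMinExt (S : PTS State Tr AP) (T : Finset Tr) (ST : PTS State Tr AP) : Prop :=
  ∃ (sbot : State) (tbot : Tr) (ts : State → Tr),
    sbot ∉ STStates S T ∧
    (∀ s, ts s ∉ T) ∧ tbot ∉ T ∧ (∀ s, ts s ≠ tbot) ∧
    Set.InjOn ts { s ∈ STStates S T | outP S T s < 1 } ∧
    ST.states = STStates S T ∪ {sbot} ∧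
    ST.transitions = ↑T ∪ ts '' { s ∈ STStates S T | outP S T s < 1 } ∪ {tbot} ∧
    ST.init = S.init ∧
    (∀ t ∈ T, ST.source t = S.source t ∧ ST.target t = S.target t ∧
      ST.prob t = S.prob t) ∧
    (∀ s ∈ STStates S T, outP S T s < 1 →
      ST.source (ts s) = s ∧ ST.target (ts s) = sbot ∧
      ST.prob (ts s) = 1 - outP S T s) ∧
    ST.source tbot = sbot ∧ ST.target tbot = sbot ∧ ST.prob tbot = 1 ∧
    ST.label sbot = ∅ ∧ (∀ s ∈ STStates S T, ST.label s = S.label s)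

/- ## Truncations and the prefix metric -/

/-- `e[n]`: the execution path `e` truncated at length `n`. -/
def trunc (e : ℕ → Tr) (n : ℕ) : List Tr := (List.range n).map e

/-- The distance `d(e₁,e₂) = inf { 2^{-n} : e₁[n] = e₂[n] }`. -/
noncomputable def pathDist (e₁ e₂ : ℕ → Tr) : ℝ :=
  sInf ((fun n : ℕ => ((1 : ℝ) / 2) ^ n) '' { n | trunc e₁ n = trunc e₂ n })

/-- `A` is closed with respect to the metric `pathDist`. -/
def ClosedPaths (A : Set (ℕ → Tr)) : Prop :=
  ∀ e, (∀ ε : ℝ, 0 < ε → ∃ e' ∈ A, pathDist e' e < ε) → e ∈ A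

/-!
For each length `n`, split the paths of `S_T` that never leave `T` by whether the cylinder of
their length-`n` prefix satisfies `φ` in `S_T`. Since `φ` is positive and the sink of `S_T` has
the empty label, `S_T` has the pointwise smallest traces among the extensions of `T`, so a good
cylinder satisfies `φ` in every extension `S'` as well; it has the same mass there, hence the
good part is bounded by `μ_{S'}(B^φ_{S'}(T))`. A bad cylinder contains a violating path, which
must leave `T` because some extension satisfies `φ` everywhere, so a leak to the sink is
reachable from its end. There are finitely many explored states, so the leak is reached within
`L` steps with probability at least some `c > 0`, and the bad mass at length `k L` is at most
`(1 - c)^k`.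
-/

theorem LTLSat.mono {φ : LTLPlus AP} {ρ σ : ℕ → Set AP} (h : ∀ n, ρ n ⊆ σ n)
    (hρ : LTLSat φ ρ) : LTLSat φ σ := by
  induction φ generalizing ρ σ with
  | tt => trivial
  | ff => exact hρ
  | atom a => exact h 0 hρ
  | and φ ψ ihφ ihψ => exact ⟨ihφ h hρ.1, ihψ h hρ.2⟩
  | or φ ψ ihφ ihψ => exact hρ.imp (ihφ h) (ihψ h)
  | next φ ih => exact ih (fun n => h (n + 1)) hρ
  | untl φ ψ ihφ ihψ =>
    obtain ⟨j, hj, hi⟩ := hρ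
    exact ⟨j, ihψ (fun n => h (n + j)) hj, fun i hij => ihφ (fun n => h (n + i)) (hi i hij)⟩
  | release φ ψ ihφ ihψ =>
    exact fun j => (hρ j).imp (ihψ fun n => h (n + j))
      fun ⟨i, hij, hi⟩ => ⟨i, hij, ihφ (fun n => h (n + i)) hi⟩

theorem exists_forall_lt_and_not {p : ℕ → Prop} (h : ¬ ∀ i, p i) :
    ∃ k, (∀ i < k, p i) ∧ ¬ p k := by
  classical
  have h' : ∃ i, ¬ p i := not_forall.mp h
  exact ⟨Nat.find h', fun i hi => not_not.mp (Nat.find_min h' hi), Nat.find_spec h'⟩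

theorem Finset.exists_pos_le_of_pos {α : Type*} (s : Finset α) {f : α → ℝ}
    (hf : ∀ a ∈ s, 0 < f a) : ∃ c, 0 < c ∧ ∀ a ∈ s, c ≤ f a := by
  rcases s.eq_empty_or_nonempty with rfl | hs
  · exact ⟨1, one_pos, by simp⟩
  · obtain ⟨a, ha, hmin⟩ := s.exists_min_image f hs
    exact ⟨f a, hf a ha, hmin⟩

theorem measure_diff_le_of_mul_le {α : Type*} [MeasurableSpace α] {μ : Measure α}
    {A B : Set α} {c : ENNReal} (hBA : B ⊆ A) (hB : MeasurableSet B) (hA : μ A ≠ ⊤)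
    (hc : c * μ A ≤ μ B) : μ (A \ B) ≤ (1 - c) * μ A :=
  calc μ (A \ B) = μ A - μ B :=
        measure_sdiff hBA hB.nullMeasurableSet (ne_top_of_le_ne_top hA (measure_mono hBA))
    _ ≤ μ A - c * μ A := tsub_le_tsub_left hc _
    _ = (1 - c) * μ A := by rw [ENNReal.sub_mul fun _ _ => hA, one_mul]

@[simp]
theorem length_trunc (e : ℕ → Tr) (n : ℕ) : (trunc e n).length = n := by
  simp [trunc]

@[simp]
theorem getElem_trunc (e : ℕ → Tr) (n i : ℕ) (h : i < (trunc e n).length) :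
    (trunc e n)[i] = e i := by
  simp [trunc]

theorem trunc_succ (e : ℕ → Tr) (n : ℕ) : trunc e (n + 1) = trunc e n ++ [e n] := by
  simp [trunc, List.range_succ]

theorem take_trunc (e : ℕ → Tr) (m n : ℕ) : (trunc e n).take m = trunc e (min m n) := by
  simp [trunc, ← List.map_take, List.take_range]

theorem isPrefixOf_iff_trunc {l : List Tr} {e : ℕ → Tr} :
    IsPrefixOf l e ↔ trunc e l.length = l := by
  constructor
  · exact fun h => List.ext_getElem (by simp) fun i _ hi => by simpa using (h i hi).symm
  · exact fun h i hi => (List.getElem_of_eq h.symm hi).trans (getElem_trunc _ _ _ _)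

theorem isPrefixOf_trunc (e : ℕ → Tr) (n : ℕ) : IsPrefixOf (trunc e n) e := by
  rw [isPrefixOf_iff_trunc, length_trunc]

theorem IsPrefixOf.mem {l : List Tr} {e : ℕ → Tr} {T : Finset Tr} (h : IsPrefixOf l e)
    (hl : ∀ t ∈ l, t ∈ T) {i : ℕ} (hi : i < l.length) : e i ∈ T := by
  rw [← h i hi]
  exact hl _ (List.get_mem l _)

def glue : List Tr → (ℕ → Tr) → ℕ → Tr
  | [], f => f
  | t :: l, f => fun n => match n with
    | 0 => t
    | n + 1 => glue l f n

theorem glue_length_add (l : List Tr) (f : ℕ → Tr) (m : ℕ) :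
    glue l f (l.length + m) = f m := by
  induction l with
  | nil => simp [glue]
  | cons t l ih => simpa [glue, Nat.add_right_comm] using ih

theorem glue_of_lt (l : List Tr) (f : ℕ → Tr) {n : ℕ} (hn : n < l.length) :
    glue l f n = l[n] := by
  induction l generalizing n with
  | nil => simp at hn
  | cons t l ih =>
    cases n with
    | zero => rfl
    | succ n => exact ih (by simpa using hn)

theorem glue_append (l₁ l₂ : List Tr) (f : ℕ → Tr) :
    glue (l₁ ++ l₂) f = glue l₁ (glue l₂ f) := by
  induction l₁ with
  | nil => rfl
  | cons t l ih => simp only [List.cons_append, glue, ih]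

theorem trunc_prefix_trunc (e : ℕ → Tr) {m n : ℕ} (h : m ≤ n) : trunc e m <+: trunc e n := by
  rw [← min_eq_left h, ← take_trunc]
  exact List.take_prefix _ _

theorem IsPrefixOf.prefix_trunc {l : List Tr} {e : ℕ → Tr} (h : IsPrefixOf l e) {n : ℕ}
    (hn : l.length ≤ n) : l <+: trunc e n := by
  rw [isPrefixOf_iff_trunc] at h
  exact h ▸ trunc_prefix_trunc e hn

theorem isPrefixOf_glue_of_prefix {l l' : List Tr} (h : l <+: l') (f : ℕ → Tr) :
    IsPrefixOf l (glue l' f) := by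
  obtain ⟨r, rfl⟩ := h
  intro i hi
  rw [glue_of_lt _ _ (by simp; omega)]
  simp [List.getElem_append_left hi]

theorem isPrefixOf_glue (l : List Tr) (f : ℕ → Tr) : IsPrefixOf l (glue l f) :=
  isPrefixOf_glue_of_prefix (List.prefix_refl l) f

namespace PTS

variable (S : PTS State Tr AP)

theorem cyl_anti {l₁ l₂ : List Tr} (h : l₁ <+: l₂) : S.Cyl l₂ ⊆ S.Cyl l₁ := by
  rintro e ⟨he, hpre⟩
  rw [isPrefixOf_iff_trunc] at hpre
  refine ⟨he, isPrefixOf_iff_trunc.mpr ?_⟩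
  rw [← min_eq_left h.length_le, ← take_trunc, hpre, ← List.prefix_iff_eq_take.mp h]

theorem cyl_disjoint {l₁ l₂ : List Tr} (hlen : l₁.length = l₂.length) (hne : l₁ ≠ l₂) :
    Disjoint (S.Cyl l₁) (S.Cyl l₂) := by
  refine Set.disjoint_left.mpr fun e ⟨_, h₁⟩ ⟨_, h₂⟩ => hne ?_
  rw [isPrefixOf_iff_trunc] at h₁ h₂
  rw [← h₁, ← h₂, hlen]

theorem measure_biUnion_cyl (μ : Measure (ℕ → Tr)) {n : ℕ} (F : Finset (List Tr))
    (hF : ∀ l ∈ F, l.length = n) : μ (⋃ l ∈ F, S.Cyl l) = ∑ l ∈ F, μ (S.Cyl l) :=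
  measure_biUnion_finset
    (fun l₁ h₁ l₂ h₂ hne => S.cyl_disjoint (by rw [hF l₁ h₁, hF l₂ h₂]) hne)
    fun _ _ => MeasurableSpace.measurableSet_top

def IsExecFrom (s : State) (f : ℕ → Tr) : Prop :=
  (∀ i, f i ∈ S.transitions) ∧ S.source (f 0) = s ∧ ∀ i, S.target (f i) = S.source (f (i + 1))

theorem isExecFrom_glue_cons {s : State} {t : Tr} {l : List Tr} {f : ℕ → Tr} :
    S.IsExecFrom s (glue (t :: l) f) ↔
      t ∈ S.transitions ∧ S.source t = s ∧ S.IsExecFrom (S.target t) (glue l f) := by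
  constructor
  · rintro ⟨hmem, hsrc, hchain⟩
    exact ⟨hmem 0, hsrc, fun i => hmem (i + 1), (hchain 0).symm, fun i => hchain (i + 1)⟩
  · rintro ⟨ht, hsrc, hmem, hsrc', hchain⟩
    refine ⟨fun i => ?_, hsrc, fun i => ?_⟩
    · cases i with
      | zero => exact ht
      | succ i => exact hmem i
    · cases i with
      | zero => exact hsrc'.symm
      | succ i => exact hchain i

theorem exists_transition_source {s : State} (hs : s ∈ S.states) :
    ∃ t ∈ S.transitions, S.source t = s := by
  by_contra! h
  have hempty : IsEmpty { t : Tr // t ∈ S.transitions ∧ S.source t = s } :=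
    ⟨fun t => h t.1 t.2.1 t.2.2⟩
  simpa using S.prob_sum s hs

theorem exists_isExecFrom {s : State} (hs : s ∈ S.states) : ∃ f, S.IsExecFrom s f := by
  have : Nonempty Tr := ⟨(S.exists_transition_source hs).choose⟩
  choose! next hnext hsrc using fun s (hs : s ∈ S.states) => S.exists_transition_source hs
  let visit : ℕ → State := fun n => (S.target ∘ next)^[n] s
  have hvisit : ∀ n, visit n ∈ S.states := fun n => by
    induction n with
    | zero => exact hs
    | succ n ih =>
      simp only [visit, Function.iterate_succ_apply']
      exact S.target_mem _ (hnext _ ih)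
  refine ⟨fun n => next (visit n), fun i => hnext _ (hvisit i), hsrc _ hs, fun i => ?_⟩
  rw [hsrc _ (hvisit (i + 1))]
  simp only [visit, Function.iterate_succ_apply', Function.comp_apply]

theorem sum_prob_le_one {s : State} (hs : s ∈ S.states) (F : Finset Tr)
    (hF : ∀ t ∈ F, t ∈ S.transitions ∧ S.source t = s) : ∑ t ∈ F, S.prob t ≤ 1 := by
  classical
  have hsum := S.prob_sum s hs
  have hsummable : Summable fun t : { t // t ∈ S.transitions ∧ S.source t = s } =>
      S.prob t.1 := by
    by_contra h
    rw [tsum_eq_zero_of_not_summable h] at hsum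
    exact zero_ne_one hsum
  rw [← Finset.sum_subtype_of_mem _ hF, ← hsum]
  exact hsummable.sum_le_tsum _ fun t _ => (S.prob_pos t.1 t.2.1).le

end PTS

section Walks

def IsExplWalk (S : PTS State Tr AP) (T : Finset Tr) : State → List Tr → Prop
  | _, [] => True
  | s, t :: l => t ∈ T ∧ S.source t = s ∧ IsExplWalk S T (S.target t) l

def PTS.walkEnd (S : PTS State Tr AP) (s : State) (l : List Tr) : State :=
  l.foldl (fun _ t => S.target t) s

variable {S : PTS State Tr AP} {T : Finset Tr}

@[simp]
theorem PTS.walkEnd_append (s : State) (l₁ l₂ : List Tr) :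
    S.walkEnd s (l₁ ++ l₂) = S.walkEnd (S.walkEnd s l₁) l₂ :=
  List.foldl_append

@[simp]
theorem PTS.walkEnd_singleton (s : State) (t : Tr) : S.walkEnd s [t] = S.target t := rfl

theorem isExplWalk_append {s : State} {l₁ l₂ : List Tr} :
    IsExplWalk S T s (l₁ ++ l₂) ↔
      IsExplWalk S T s l₁ ∧ IsExplWalk S T (S.walkEnd s l₁) l₂ := by
  induction l₁ generalizing s with
  | nil => simp [IsExplWalk, PTS.walkEnd]
  | cons t l ih =>
    simp only [List.cons_append, IsExplWalk, ih, PTS.walkEnd, List.foldl_cons, and_assoc]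

theorem isExplWalk_singleton {s : State} {t : Tr} :
    IsExplWalk S T s [t] ↔ t ∈ T ∧ S.source t = s := by
  simp [IsExplWalk]

theorem IsExplWalk.forall_mem {s : State} {l : List Tr} (h : IsExplWalk S T s l) :
    ∀ t ∈ l, t ∈ T := by
  induction l generalizing s with
  | nil => simp
  | cons t l ih => exact List.forall_mem_cons.mpr ⟨h.1, ih h.2.2⟩

theorem source_mem_STStates {t : Tr} (ht : t ∈ T) : S.source t ∈ STStates S T :=
  Or.inl (Or.inl ⟨t, ht, rfl⟩)

theorem target_mem_STStates {t : Tr} (ht : t ∈ T) : S.target t ∈ STStates S T :=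
  Or.inl (Or.inr ⟨t, ht, rfl⟩)

theorem init_mem_STStates : S.init ∈ STStates S T := Or.inr rfl

theorem STStates_finite : (STStates S T).Finite :=
  ((T.finite_toSet.image _).union (T.finite_toSet.image _)).union (Set.finite_singleton _)

theorem IsExplWalk.walkEnd_mem_STStates {s : State} {l : List Tr} (hs : s ∈ STStates S T)
    (h : IsExplWalk S T s l) : S.walkEnd s l ∈ STStates S T := by
  induction l generalizing s with
  | nil => exact hs
  | cons t l ih => exact ih (target_mem_STStates h.1) h.2.2

theorem finite_setOf_isExplWalk (s : State) (n : ℕ) :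
    {l : List Tr | l.length = n ∧ IsExplWalk S T s l}.Finite := by
  refine ((List.finite_length_eq T n).image (List.map Subtype.val)).subset ?_
  rintro l ⟨hlen, hl⟩
  exact ⟨l.attachWith (· ∈ T) hl.forall_mem, by simpa using hlen,
    List.attachWith_map_subtype_val _⟩

variable (S T) in
/-- `outP S T s < 1` means that `s` has a leak transition to the sink in `S_T`. -/
def LeakReachable (s : State) : Prop :=
  ∃ q, IsExplWalk S T s q ∧ outP S T (S.walkEnd s q) < 1

end Walks

def PTS.CylSat (S : PTS State Tr AP) (l : List Tr) (φ : Set (ℕ → Set AP)) : Prop :=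
  ∀ e ∈ S.Cyl l, S.SatPath e φ

namespace PTS.Extends

variable {S S' S₁ S₂ : PTS State Tr AP} {T : Finset Tr} {t : Tr}

theorem mem_transitions (h : S'.Extends S T) (ht : t ∈ T) : t ∈ S'.transitions := h.1 t ht

theorem init_eq (h : S'.Extends S T) : S'.init = S.init := h.2.1

theorem source_eq (h : S'.Extends S T) (ht : t ∈ T) : S'.source t = S.source t :=
  (h.2.2 t ht).1

theorem target_eq (h : S'.Extends S T) (ht : t ∈ T) : S'.target t = S.target t :=
  (h.2.2 t ht).2.1

theorem prob_eq (h : S'.Extends S T) (ht : t ∈ T) : S'.prob t = S.prob t :=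
  (h.2.2 t ht).2.2.1

theorem label_source_eq (h : S'.Extends S T) (ht : t ∈ T) :
    S'.label (S'.source t) = S.label (S.source t) :=
  (h.2.2 t ht).2.2.2.1

theorem label_target_eq (h : S'.Extends S T) (ht : t ∈ T) :
    S'.label (S'.target t) = S.label (S.target t) :=
  (h.2.2 t ht).2.2.2.2

theorem prob_pos (h : S'.Extends S T) (ht : t ∈ T) : 0 < S.prob t :=
  h.prob_eq ht ▸ S'.prob_pos t (h.mem_transitions ht)

theorem STStates_subset_states (h : S'.Extends S T) : STStates S T ⊆ S'.states := by
  rintro s ((⟨t, ht, rfl⟩ | ⟨t, ht, rfl⟩) | rfl)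
  · exact h.source_eq ht ▸ S'.source_mem t (h.mem_transitions ht)
  · exact h.target_eq ht ▸ S'.target_mem t (h.mem_transitions ht)
  · exact h.init_eq ▸ S'.init_mem

theorem label_eq (h : S'.Extends S T) (hinit : ∃ t ∈ T, S.source t = S.init) {s : State}
    (hs : s ∈ STStates S T) : S'.label s = S.label s := by
  rcases hs with (⟨t, ht, rfl⟩ | ⟨t, ht, rfl⟩) | rfl
  · simpa [h.source_eq ht] using h.label_source_eq ht
  · simpa [h.target_eq ht] using h.label_target_eq ht
  · obtain ⟨t, ht, hsrc⟩ := hinit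
    simpa [h.source_eq ht, hsrc] using h.label_source_eq ht

theorem isExec_of_forall_mem (h₁ : S₁.Extends S T) (h₂ : S₂.Extends S T) {e : ℕ → Tr}
    (he : S₁.IsExec e) (hT : ∀ i, e i ∈ T) : S₂.IsExec e := by
  obtain ⟨-, hsrc, hchain⟩ := he
  refine ⟨fun i => h₂.mem_transitions (hT i), ?_, fun i => ?_⟩
  · rw [h₂.source_eq (hT 0), ← h₁.source_eq (hT 0), hsrc, h₁.init_eq, h₂.init_eq]
  · rw [h₂.target_eq (hT i), h₂.source_eq (hT (i + 1)), ← h₁.target_eq (hT i),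
      ← h₁.source_eq (hT (i + 1)), hchain i]

theorem traceOf_eq_of_forall_mem (h₁ : S₁.Extends S T) (h₂ : S₂.Extends S T) {e : ℕ → Tr}
    (hT : ∀ i, e i ∈ T) : S₁.traceOf e = S₂.traceOf e :=
  funext fun i => (h₁.label_source_eq (hT i)).trans (h₂.label_source_eq (hT i)).symm

theorem satPath_of_forall_mem (h₁ : S₁.Extends S T) (h₂ : S₂.Extends S T)
    {φ : Set (ℕ → Set AP)} (hsat : ∀ e, S₁.IsExec e → S₁.SatPath e φ) {e : ℕ → Tr}
    (he : S₂.IsExec e) (hT : ∀ i, e i ∈ T) : S₂.SatPath e φ := by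
  have := hsat e (isExec_of_forall_mem h₂ h₁ he hT)
  rwa [PTS.SatPath, traceOf_eq_of_forall_mem h₁ h₂ hT] at this

theorem isExplWalk_trunc (h : S'.Extends S T) {e : ℕ → Tr} (he : S'.IsExec e) {k : ℕ}
    (hk : ∀ i < k, e i ∈ T) :
    IsExplWalk S T S.init (trunc e k) ∧ S.walkEnd S.init (trunc e k) = S'.source (e k) := by
  induction k with
  | zero => exact ⟨trivial, by rw [he.2.1, h.init_eq]; rfl⟩
  | succ k ih =>
    obtain ⟨hwalk, hend⟩ := ih fun i hi => hk i (Nat.lt_succ_of_lt hi)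
    have hek := hk k (Nat.lt_succ_self k)
    rw [trunc_succ, isExplWalk_append, isExplWalk_singleton, PTS.walkEnd_append,
      PTS.walkEnd_singleton, ← h.target_eq hek, he.2.2 k, hend, h.source_eq hek]
    exact ⟨⟨hwalk, hek, rfl⟩, rfl⟩

theorem isExecFrom_glue (h : S'.Extends S T) {s : State} {l : List Tr} {f : ℕ → Tr}
    (hl : IsExplWalk S T s l) (hf : S'.IsExecFrom (S.walkEnd s l) f) :
    S'.IsExecFrom s (glue l f) := by
  induction l generalizing s with
  | nil => exact hf
  | cons t l ih =>
    obtain ⟨ht, hsrc, hl⟩ := hl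
    rw [PTS.isExecFrom_glue_cons, h.source_eq ht, h.target_eq ht]
    exact ⟨h.mem_transitions ht, hsrc, ih hl hf⟩

theorem isPrefExec_of_isExplWalk (h : S'.Extends S T) {l : List Tr}
    (hl : IsExplWalk S T S.init l) : S'.IsPrefExec l := by
  have hend := h.STStates_subset_states (hl.walkEnd_mem_STStates init_mem_STStates)
  obtain ⟨f, hf⟩ := S'.exists_isExecFrom hend
  have hexec := h.isExecFrom_glue hl hf
  rw [← h.init_eq] at hexec
  exact ⟨glue l f, hexec, isPrefixOf_glue l f⟩

theorem measure_cyl (h : S'.Extends S T) {μ : Measure (ℕ → Tr)} (hμ : CylSpec S' μ)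
    {l : List Tr} (hl : IsExplWalk S T S.init l) :
    μ (S'.Cyl l) = ENNReal.ofReal (l.map S.prob).prod := by
  rw [hμ l (h.isPrefExec_of_isExplWalk hl),
    List.map_congr_left fun t ht => h.prob_eq (hl.forall_mem t ht)]

theorem outP_lt_one (h : S'.Extends S T) {s : State} (hs : s ∈ S'.states)
    (ht : t ∈ S'.transitions) (htT : t ∉ T) (hsrc : S'.source t = s) : outP S T s < 1 := by
  classical
  have hsum := S'.sum_prob_le_one hs (insert t (T.filter fun t' => S.source t' = s))
    (by
      simp only [Finset.mem_insert, Finset.mem_filter]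
      rintro t' (rfl | ⟨ht', hsrc'⟩)
      · exact ⟨ht, hsrc⟩
      · exact ⟨h.mem_transitions ht', (h.source_eq ht').trans hsrc'⟩)
  rw [Finset.sum_insert (by simp [htT]),
    Finset.sum_congr rfl fun t' ht' => h.prob_eq (Finset.mem_filter.mp ht').1] at hsum
  unfold outP
  linarith [S'.prob_pos t ht]

theorem outP_walkEnd_trunc_lt_one (h : S'.Extends S T) {e : ℕ → Tr} (he : S'.IsExec e)
    {k : ℕ} (hk : ∀ i < k, e i ∈ T) (hkT : e k ∉ T) :
    outP S T (S.walkEnd S.init (trunc e k)) < 1 := by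
  rw [(h.isExplWalk_trunc he hk).2]
  exact h.outP_lt_one (S'.source_mem _ (he.1 k)) (he.1 k) hkT rfl

/-- A cylinder of `S'` containing a violation contains one that leaves `T`, because some
extension of `T` satisfies `φ` on all its paths; the exit point is a leak. -/
theorem leakReachable_of_not_cylSat (h : S'.Extends S T) {φ : Set (ℕ → Set AP)}
    (hnv : NotFoundViolation S T φ) {l : List Tr} (hl : IsExplWalk S T S.init l)
    (hbad : ¬ S'.CylSat l φ) : LeakReachable S T (S.walkEnd S.init l) := by
  obtain ⟨S₀, h₀, hsat₀⟩ := hnv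
  simp only [PTS.CylSat, not_forall] at hbad
  obtain ⟨e, ⟨he, hpre⟩, hviol⟩ := hbad
  obtain ⟨k, hk, hkT⟩ := exists_forall_lt_and_not fun hT =>
    hviol (satPath_of_forall_mem h₀ h hsat₀ he hT)
  have hlk : l.length ≤ k := not_lt.mp fun hlt => hkT (hpre.mem hl.forall_mem hlt)
  have hsplit : trunc e k = l ++ (trunc e k).drop l.length := by
    conv_lhs => rw [← List.take_append_drop l.length (trunc e k)]
    rw [take_trunc, min_eq_left hlk, isPrefixOf_iff_trunc.mp hpre]
  have hwalk := (h.isExplWalk_trunc he hk).1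
  rw [hsplit, isExplWalk_append] at hwalk
  refine ⟨_, hwalk.2, ?_⟩
  rw [← PTS.walkEnd_append, ← hsplit]
  exact h.outP_walkEnd_trunc_lt_one he hk hkT

end PTS.Extends

section MinExt

variable {S S' ST : PTS State Tr AP} {T : Finset Tr}

theorem prod_prob_pos (hpos : ∀ t ∈ T, 0 < S.prob t) {l : List Tr} (hl : ∀ t ∈ l, t ∈ T) :
    0 < (l.map S.prob).prod :=
  List.prod_pos fun _ hx => by
    obtain ⟨t, ht, rfl⟩ := List.mem_map.mp hx
    exact hpos t (hl t ht)

/-- `1 - outP S T s` is the probability of the leak transition out of `s` in `S_T`. -/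
def LeaksWithin (S : PTS State Tr AP) (T : Finset Tr) (L : ℕ) (c : ℝ) (s : State) : Prop :=
  ∃ q, IsExplWalk S T s q ∧ outP S T (S.walkEnd s q) < 1 ∧ q.length < L ∧
    c ≤ (q.map S.prob).prod * (1 - outP S T (S.walkEnd s q))

/-- Uniform because only finitely many states are explored. -/
theorem exists_uniform_leaksWithin (hpos : ∀ t ∈ T, 0 < S.prob t) :
    ∃ L : ℕ, ∃ c : ℝ, 0 < c ∧
      ∀ s ∈ STStates S T, LeakReachable S T s → LeaksWithin S T L c s := by
  classical
  choose! q hq hout using fun s (hs : LeakReachable S T s) => hs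
  set R := (STStates_finite (S := S) (T := T)).toFinset.filter (LeakReachable S T)
  obtain ⟨c, hc, hcle⟩ := R.exists_pos_le_of_pos
    (f := fun s => ((q s).map S.prob).prod * (1 - outP S T (S.walkEnd s (q s))))
    fun s hs => by
      have hr := (Finset.mem_filter.mp hs).2
      exact mul_pos (prod_prob_pos hpos (hq s hr).forall_mem) (sub_pos.mpr (hout s hr))
  refine ⟨R.sup (fun s => (q s).length) + 1, c, hc, fun s hs hr => ?_⟩
  have hsR : s ∈ R := Finset.mem_filter.mpr ⟨(Set.Finite.mem_toFinset _).mpr hs, hr⟩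
  exact ⟨q s, hq s hr, hout s hr,
    Nat.lt_succ_of_le (Finset.le_sup (f := fun s => (q s).length) hsR), hcle s hsR⟩

/-- `IsMinExt` for a given sink state, sink self-loop and family of leak transitions. -/
structure IsMinExtWith (S : PTS State Tr AP) (T : Finset Tr) (ST : PTS State Tr AP)
    (sink : State) (loop : Tr) (leak : State → Tr) : Prop where
  leak_not_mem : ∀ s, leak s ∉ T
  transitions_eq :
    ST.transitions = ↑T ∪ leak '' { s ∈ STStates S T | outP S T s < 1 } ∪ {loop}
  init_eq : ST.init = S.init
  data_eq : ∀ t ∈ T,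
    ST.source t = S.source t ∧ ST.target t = S.target t ∧ ST.prob t = S.prob t
  leak_data : ∀ s ∈ STStates S T, outP S T s < 1 →
    ST.source (leak s) = s ∧ ST.target (leak s) = sink ∧ ST.prob (leak s) = 1 - outP S T s
  loop_source : ST.source loop = sink
  loop_target : ST.target loop = sink
  label_sink : ST.label sink = ∅
  label_eq : ∀ s ∈ STStates S T, ST.label s = S.label s

theorem IsMinExt.exists_isMinExtWith (h : IsMinExt S T ST) :
    ∃ sink loop leak, IsMinExtWith S T ST sink loop leak := by
  obtain ⟨sink, loop, leak, -, hleak, -, -, -, -, htr, hinit, hdata, hleakd, hls, hlt, -,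
    hlabs, hlab⟩ := h
  exact ⟨sink, loop, leak, hleak, htr, hinit, hdata, hleakd, hls, hlt, hlabs, hlab⟩

namespace IsMinExtWith

variable {sink : State} {loop : Tr} {leak : State → Tr}

theorem toExtends (hW : IsMinExtWith S T ST sink loop leak) : ST.Extends S T := by
  refine ⟨fun t ht => by rw [hW.transitions_eq]; exact Or.inl (Or.inl ht), hW.init_eq,
    fun t ht => ?_⟩
  obtain ⟨hsrc, htgt, hprob⟩ := hW.data_eq t ht
  exact ⟨hsrc, htgt, hprob, by rw [hsrc, hW.label_eq _ (source_mem_STStates ht)],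
    by rw [htgt, hW.label_eq _ (target_mem_STStates ht)]⟩

theorem isExecFrom_leak (hW : IsMinExtWith S T ST sink loop leak) {s : State}
    (hs : s ∈ STStates S T) (hout : outP S T s < 1) :
    ST.IsExecFrom s (glue [leak s] fun _ => loop) := by
  obtain ⟨hsrc, htgt, -⟩ := hW.leak_data s hs hout
  have hloop : ST.IsExecFrom sink fun _ => loop :=
    ⟨fun _ => by rw [hW.transitions_eq]; exact Or.inr rfl, hW.loop_source,
      fun _ => by rw [hW.loop_target, hW.loop_source]⟩
  rw [PTS.isExecFrom_glue_cons, hsrc, htgt, hW.transitions_eq]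
  exact ⟨Or.inl (Or.inr ⟨s, ⟨hs, hout⟩, rfl⟩), rfl, hloop⟩

theorem isExec_glue_leak (hW : IsMinExtWith S T ST sink loop leak) {l : List Tr}
    (hl : IsExplWalk S T S.init l) (hout : outP S T (S.walkEnd S.init l) < 1) :
    ST.IsExec (glue (l ++ [leak (S.walkEnd S.init l)]) fun _ => loop) := by
  have h := hW.toExtends.isExecFrom_glue hl
    (hW.isExecFrom_leak (hl.walkEnd_mem_STStates init_mem_STStates) hout)
  rw [← glue_append] at h
  show ST.IsExecFrom ST.init _
  rwa [hW.init_eq]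

theorem traceOf_glue_leak_subset (hW : IsMinExtWith S T ST sink loop leak)
    (hS' : S'.Extends S T) (hinit : ∃ t ∈ T, S.source t = S.init) {e : ℕ → Tr}
    (he : S'.IsExec e) {k : ℕ} (hk : ∀ i < k, e i ∈ T)
    (hout : outP S T (S.walkEnd S.init (trunc e k)) < 1) (n : ℕ) :
    ST.traceOf (glue (trunc e k ++ [leak (S.walkEnd S.init (trunc e k))]) fun _ => loop) n ⊆
      S'.traceOf e n := by
  obtain ⟨hwalk, hend⟩ := hS'.isExplWalk_trunc he hk
  have hs := hwalk.walkEnd_mem_STStates init_mem_STStates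
  simp only [PTS.traceOf]
  rcases lt_trichotomy n k with hn | rfl | hn
  · rw [glue_of_lt _ _ (by simp; omega), List.getElem_append_left (by simpa using hn),
      getElem_trunc, hW.toExtends.label_source_eq (hk n hn), hS'.label_source_eq (hk n hn)]
  · rw [glue_of_lt _ _ (by simp), List.getElem_append_right (by simp)]
    simp only [length_trunc, Nat.sub_self, List.getElem_cons_zero]
    rw [(hW.leak_data _ hs hout).1, hW.label_eq _ hs, ← hend, hS'.label_eq hinit hs]
  · obtain ⟨m, rfl⟩ := Nat.exists_eq_add_of_lt hn
    have hlen :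
        k + m + 1 = (trunc e k ++ [leak (S.walkEnd S.init (trunc e k))]).length + m := by
      simp only [List.length_append, length_trunc, List.length_singleton]
      omega
    rw [hlen, glue_length_add, hW.loop_source, hW.label_sink]
    exact Set.empty_subset _

end IsMinExtWith

end MinExt

section Measure

variable {S S' ST : PTS State Tr AP} {T : Finset Tr} {sink : State} {loop : Tr}
  {leak : State → Tr}

/-- Along an explored cylinder, a violating path of any extension yields one of `S_T`: follow it
to its first unexplored transition, then drop into the sink, whose empty labels can only make
the positive formula `φ` harder to satisfy. -/
theorem IsMinExtWith.cylSat_of_cylSat (hW : IsMinExtWith S T ST sink loop leak)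
    (hS' : S'.Extends S T) (hinit : ∃ t ∈ T, S.source t = S.init) {φ : LTLPlus AP}
    {l : List Tr} (hl : ∀ t ∈ l, t ∈ T) (hgood : ST.CylSat l { ρ | LTLSat φ ρ }) :
    S'.CylSat l { ρ | LTLSat φ ρ } := by
  rintro e ⟨he, hpre⟩
  by_cases hT : ∀ i, e i ∈ T
  · have hsat := hgood e ⟨hS'.isExec_of_forall_mem hW.toExtends he hT, hpre⟩
    rwa [PTS.SatPath, hS'.traceOf_eq_of_forall_mem hW.toExtends hT]
  obtain ⟨k, hk, hkT⟩ := exists_forall_lt_and_not hT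
  have hlk : l.length ≤ k := not_lt.mp fun hlt => hkT (hpre.mem hl hlt)
  have hout := hS'.outP_walkEnd_trunc_lt_one he hk hkT
  have hsat := hgood _ ⟨hW.isExec_glue_leak (hS'.isExplWalk_trunc he hk).1 hout,
    isPrefixOf_glue_of_prefix ((hpre.prefix_trunc hlk).trans (List.prefix_append _ _)) _⟩
  exact LTLSat.mono (hW.traceOf_glue_leak_subset hS' hinit he hk hout) hsat

/-- The paths of the subcylinder `l ++ q ++ [leak]` leave `T` before step `l.length + L`. -/
theorem IsMinExtWith.measure_cyl_inter_le (hW : IsMinExtWith S T ST sink loop leak)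
    {μ : Measure (ℕ → Tr)} (hμ : CylSpec ST μ) {l : List Tr} (hl : IsExplWalk S T S.init l)
    {L : ℕ} {c : ℝ} (hleak : LeaksWithin S T L c (S.walkEnd S.init l)) :
    μ (ST.Cyl l ∩ { e | ∀ i < l.length + L, e i ∈ T }) ≤
      (1 - ENNReal.ofReal c) * μ (ST.Cyl l) := by
  obtain ⟨q, hq, hout, hqL, hc⟩ := hleak
  have hlq : IsExplWalk S T S.init (l ++ q) := isExplWalk_append.mpr ⟨hl, hq⟩
  rw [← PTS.walkEnd_append] at hout hc
  set s := S.walkEnd S.init (l ++ q)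
  set w := l ++ q ++ [leak s]
  have hexec := hW.isExec_glue_leak hlq hout
  have hsub : ST.Cyl w ⊆ ST.Cyl l := ST.cyl_anti (by simp [w])
  have hleave : ST.Cyl l ∩ { e | ∀ i < l.length + L, e i ∈ T } ⊆ ST.Cyl l \ ST.Cyl w := by
    rintro e ⟨hel, hsurv⟩
    refine ⟨hel, fun ⟨_, hpre⟩ => ?_⟩
    have hlast := hpre (l ++ q).length (by simp [w])
    simp only [w, List.get_eq_getElem, List.getElem_append_right le_rfl, Nat.sub_self,
      List.getElem_cons_zero] at hlast
    exact hW.leak_not_mem s (hlast ▸ hsurv _ (by simp; omega))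
  have hpos : ∀ t ∈ T, 0 < S.prob t := fun t ht => hW.toExtends.prob_pos ht
  have hWl := (prod_prob_pos hpos hl.forall_mem).le
  have hmass : ENNReal.ofReal c * μ (ST.Cyl l) ≤ μ (ST.Cyl w) := by
    have hw : (w.map ST.prob).prod =
        (l.map S.prob).prod * ((q.map S.prob).prod * (1 - outP S T s)) := by
      simp only [w, List.map_append, List.prod_append, List.map_singleton, List.prod_singleton,
        (hW.leak_data s (hlq.walkEnd_mem_STStates init_mem_STStates) hout).2.2]
      rw [List.map_congr_left fun t ht => hW.toExtends.prob_eq (hl.forall_mem t ht),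
        List.map_congr_left fun t ht => hW.toExtends.prob_eq (hq.forall_mem t ht)]
      ring
    rw [hW.toExtends.measure_cyl hμ hl, hμ w ⟨_, hexec, isPrefixOf_glue w _⟩, hw,
      ← ENNReal.ofReal_mul' hWl]
    exact ENNReal.ofReal_le_ofReal (by nlinarith)
  calc μ (ST.Cyl l ∩ { e | ∀ i < l.length + L, e i ∈ T })
      ≤ μ (ST.Cyl l \ ST.Cyl w) := measure_mono hleave
    _ ≤ (1 - ENNReal.ofReal c) * μ (ST.Cyl l) :=
      measure_diff_le_of_mul_le hsub MeasurableSpace.measurableSet_top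
        (by rw [hW.toExtends.measure_cyl hμ hl]; exact ENNReal.ofReal_ne_top) hmass

variable (S T) in
noncomputable def explWalks (n : ℕ) : Finset (List Tr) :=
  (finite_setOf_isExplWalk (S := S) (T := T) S.init n).toFinset

theorem mem_explWalks {n : ℕ} {l : List Tr} :
    l ∈ explWalks S T n ↔ l.length = n ∧ IsExplWalk S T S.init l :=
  Set.Finite.mem_toFinset _

variable (T) in
def PTS.explPaths (S : PTS State Tr AP) (n : ℕ) (P : List Tr → Prop) : Set (ℕ → Tr) :=
  { e | S.IsExec e ∧ (∀ i < n, e i ∈ T) ∧ P (trunc e n) }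

theorem PTS.Extends.biUnion_cyl_explWalks (h : S'.Extends S T) (n : ℕ) (P : List Tr → Prop)
    [DecidablePred P] : ⋃ l ∈ (explWalks S T n).filter P, S'.Cyl l = S'.explPaths T n P := by
  ext e
  simp only [Set.mem_iUnion, Finset.mem_filter, mem_explWalks, PTS.explPaths, Set.mem_ofPred_eq,
    exists_prop]
  constructor
  · rintro ⟨l, ⟨⟨rfl, hl⟩, hP⟩, he, hpre⟩
    exact ⟨he, fun i hi => hpre.mem hl.forall_mem hi, by rwa [isPrefixOf_iff_trunc.mp hpre]⟩
  · rintro ⟨he, hk, hP⟩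
    exact ⟨trunc e n, ⟨⟨length_trunc e n, (h.isExplWalk_trunc he hk).1⟩, hP⟩, he,
      isPrefixOf_trunc e n⟩

theorem PTS.Extends.measure_biUnion_cyl_eq {S₁ S₂ : PTS State Tr AP} (h₁ : S₁.Extends S T)
    (h₂ : S₂.Extends S T) {μ₁ μ₂ : Measure (ℕ → Tr)} (hμ₁ : CylSpec S₁ μ₁)
    (hμ₂ : CylSpec S₂ μ₂) {n : ℕ} {F : Finset (List Tr)} (hF : F ⊆ explWalks S T n) :
    μ₁ (⋃ l ∈ F, S₁.Cyl l) = μ₂ (⋃ l ∈ F, S₂.Cyl l) := by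
  have hlen : ∀ l ∈ F, l.length = n := fun l hl => (mem_explWalks.mp (hF hl)).1
  rw [S₁.measure_biUnion_cyl μ₁ F hlen, S₂.measure_biUnion_cyl μ₂ F hlen]
  refine Finset.sum_congr rfl fun l hl => ?_
  have hwalk := (mem_explWalks.mp (hF hl)).2
  rw [h₁.measure_cyl hμ₁ hwalk, h₂.measure_cyl hμ₂ hwalk]

theorem IsMinExtWith.measure_explPaths_cylSat_le (hW : IsMinExtWith S T ST sink loop leak)
    (hS' : S'.Extends S T) (hinit : ∃ t ∈ T, S.source t = S.init) {μ μ' : Measure (ℕ → Tr)}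
    (hμ : CylSpec ST μ) (hμ' : CylSpec S' μ') (φ : LTLPlus AP) (n : ℕ) :
    μ (ST.explPaths T n fun l => ST.CylSat l { ρ | LTLSat φ ρ }) ≤
      μ' (S'.BPhi T { ρ | LTLSat φ ρ }) := by
  classical
  rw [← hW.toExtends.biUnion_cyl_explWalks,
    hW.toExtends.measure_biUnion_cyl_eq hS' hμ hμ' (Finset.filter_subset _ _)]
  refine measure_mono (Set.biUnion_subset_biUnion_left fun l hl => ?_)
  obtain ⟨hl, hgood⟩ := Finset.mem_filter.mp hl
  have hT := (mem_explWalks.mp hl).2.forall_mem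
  exact ⟨hT, hW.cylSat_of_cylSat hS' hinit hT hgood⟩

theorem IsMinExtWith.measure_explPaths_not_cylSat_add_le
    (hW : IsMinExtWith S T ST sink loop leak) {μ : Measure (ℕ → Tr)} (hμ : CylSpec ST μ)
    {φ : Set (ℕ → Set AP)} (hnv : NotFoundViolation S T φ) {L : ℕ} {c : ℝ}
    (hleak : ∀ s ∈ STStates S T, LeakReachable S T s → LeaksWithin S T L c s) (n : ℕ) :
    μ (ST.explPaths T (n + L) fun l => ¬ ST.CylSat l φ) ≤
      (1 - ENNReal.ofReal c) * μ (ST.explPaths T n fun l => ¬ ST.CylSat l φ) := by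
  classical
  set B := (explWalks S T n).filter fun l => ¬ ST.CylSat l φ
  have hB : ∀ l ∈ B, l.length = n ∧ IsExplWalk S T S.init l ∧ ¬ ST.CylSat l φ := fun l hl =>
    have hl := Finset.mem_filter.mp hl
    ⟨(mem_explWalks.mp hl.1).1, (mem_explWalks.mp hl.1).2, hl.2⟩
  have hcover : ST.explPaths T (n + L) (fun l => ¬ ST.CylSat l φ) ⊆
      ⋃ l ∈ B, ST.Cyl l ∩ { e | ∀ i < l.length + L, e i ∈ T } := by
    rintro e ⟨he, hk, hbad⟩
    have hkn : ∀ i < n, e i ∈ T := fun i hi => hk i (by omega)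
    refine Set.mem_biUnion (x := trunc e n) (Finset.mem_filter.mpr ⟨mem_explWalks.mpr
      ⟨length_trunc e n, (hW.toExtends.isExplWalk_trunc he hkn).1⟩, fun hgood => hbad ?_⟩)
      ⟨⟨he, isPrefixOf_trunc e n⟩, by simpa using hk⟩
    exact fun e' he' => hgood e' (ST.cyl_anti (trunc_prefix_trunc e (by omega)) he')
  calc μ (ST.explPaths T (n + L) fun l => ¬ ST.CylSat l φ)
      ≤ ∑ l ∈ B, μ (ST.Cyl l ∩ { e | ∀ i < l.length + L, e i ∈ T }) :=
        (measure_mono hcover).trans (measure_biUnion_finset_le _ _)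
    _ ≤ ∑ l ∈ B, (1 - ENNReal.ofReal c) * μ (ST.Cyl l) := by
        refine Finset.sum_le_sum fun l hl => ?_
        obtain ⟨-, hl, hbad⟩ := hB l hl
        exact hW.measure_cyl_inter_le hμ hl (hleak _ (hl.walkEnd_mem_STStates init_mem_STStates)
          (hW.toExtends.leakReachable_of_not_cylSat hnv hl hbad))
    _ = (1 - ENNReal.ofReal c) * μ (ST.explPaths T n fun l => ¬ ST.CylSat l φ) := by
        rw [← Finset.mul_sum, ← ST.measure_biUnion_cyl μ B fun l hl => (hB l hl).1,
          hW.toExtends.biUnion_cyl_explWalks]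

theorem IsMinExtWith.measure_explPaths_not_cylSat_le (hW : IsMinExtWith S T ST sink loop leak)
    {μ : Measure (ℕ → Tr)} (hμ : CylSpec ST μ) {φ : Set (ℕ → Set AP)}
    (hnv : NotFoundViolation S T φ) {L : ℕ} {c : ℝ}
    (hleak : ∀ s ∈ STStates S T, LeakReachable S T s → LeaksWithin S T L c s) (k : ℕ) :
    μ (ST.explPaths T (k * L) fun l => ¬ ST.CylSat l φ) ≤ (1 - ENNReal.ofReal c) ^ k := by
  induction k with
  | zero =>
    calc μ (ST.explPaths T (0 * L) fun l => ¬ ST.CylSat l φ)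
        ≤ μ (ST.Cyl []) := measure_mono fun e he => ⟨he.1, fun _ hi => by simp at hi⟩
      _ = 1 := by simp [hW.toExtends.measure_cyl hμ (l := []) trivial]
      _ = _ := (pow_zero _).symm
  | succ k ih =>
    rw [Nat.succ_mul, pow_succ']
    exact (hW.measure_explPaths_not_cylSat_add_le hμ hnv hleak _).trans (by gcongr)

theorem IsMinExtWith.measure_explored_le_measure_BPhi (hW : IsMinExtWith S T ST sink loop leak)
    (hS' : S'.Extends S T) (hinit : ∃ t ∈ T, S.source t = S.init) {μ μ' : Measure (ℕ → Tr)}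
    (hμ : CylSpec ST μ) (hμ' : CylSpec S' μ') {φ : LTLPlus AP}
    (hnv : NotFoundViolation S T { ρ | LTLSat φ ρ }) :
    μ { e | (∀ i, e i ∈ T) ∧ ST.IsExec e } ≤ μ' (S'.BPhi T { ρ | LTLSat φ ρ }) := by
  obtain ⟨L, c, hc, hleak⟩ := exists_uniform_leaksWithin fun t ht => hW.toExtends.prob_pos ht
  have hbound : ∀ k, μ { e | (∀ i, e i ∈ T) ∧ ST.IsExec e } ≤
      μ' (S'.BPhi T { ρ | LTLSat φ ρ }) + (1 - ENNReal.ofReal c) ^ k := fun k =>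
    calc μ { e | (∀ i, e i ∈ T) ∧ ST.IsExec e }
        ≤ μ ((ST.explPaths T (k * L) fun l => ST.CylSat l { ρ | LTLSat φ ρ }) ∪
            ST.explPaths T (k * L) fun l => ¬ ST.CylSat l { ρ | LTLSat φ ρ }) :=
          measure_mono fun e ⟨hT, he⟩ => (em _).imp (⟨he, fun i _ => hT i, ·⟩)
            (⟨he, fun i _ => hT i, ·⟩)
      _ ≤ _ := (measure_union_le _ _).trans (add_le_add
          (hW.measure_explPaths_cylSat_le hS' hinit hμ hμ' φ _)
          (hW.measure_explPaths_not_cylSat_le hμ hnv hleak k))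
  have hlt : 1 - ENNReal.ofReal c < 1 :=
    ENNReal.sub_lt_self ENNReal.one_ne_top one_ne_zero (ENNReal.ofReal_pos.mpr hc).ne'
  have hlim := (ENNReal.tendsto_pow_atTop_nhds_zero_of_lt_one hlt).const_add
    (μ' (S'.BPhi T { ρ | LTLSat φ ρ }))
  rw [add_zero] at hlim
  exact ge_of_tendsto' hlim hbound

end Measure

theorem explored_measure_le_prog_general {State Tr AP : Type} (S ST : PTS State Tr AP)
    (T : Finset Tr) (hST : IsMinExt S T ST)
    (φ : LTLPlus AP)
    (M : PTS State Tr AP → MeasureTheory.Measure (ℕ → Tr))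
    (hM : ∀ S', CylSpec S' (M S'))
    (hnv : NotFoundViolation S T { ρ | LTLSat φ ρ }) :
    M ST { e : ℕ → Tr | (∀ i, e i ∈ T) ∧ ST.IsExec e } ≤
      progM M S T { ρ | LTLSat φ ρ } := by
  obtain ⟨sink, loop, leak, hW⟩ := hST.exists_isMinExtWith
  refine le_iInf fun ⟨S', hS'⟩ => ?_
  by_cases hinit : ∃ t ∈ T, S.source t = S.init
  · exact hW.measure_explored_le_measure_BPhi hS' hinit (hM ST) (hM S') hnv
  · have hempty : { e : ℕ → Tr | (∀ i, e i ∈ T) ∧ ST.IsExec e } = ∅ :=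
      Set.eq_empty_of_forall_notMem fun e ⟨hT, he⟩ => hinit ⟨e 0, hT 0, by
        rw [← hW.toExtends.source_eq (hT 0), he.2.1, hW.init_eq]⟩
    simp [hempty]

/-- If `T` has not found a violation of the LTL⁺ formula `φ`,
then `μ_{S_T}(T^ω ∩ Exec_{S_T}) ≤ prog_S(T, φ)`. -/
theorem explored_measure_le_prog {State Tr AP : Type} (S ST : PTS State Tr AP)
    (T : Finset Tr) (hT : ↑T ⊆ S.transitions) (hST : IsMinExt S T ST)
    (φ : LTLPlus AP)
    (M : PTS State Tr AP → MeasureTheory.Measure (ℕ → Tr))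
    (hM : ∀ S', CylSpec S' (M S'))
    (hMST : CylSpec ST (M ST))
    (hnv : NotFoundViolation S T { ρ | LTLSat φ ρ }) :
    M ST { e : ℕ → Tr | (∀ i, e i ∈ T) ∧ ST.IsExec e } ≤
      progM M S T { ρ | LTLSat φ ρ } :=
  explored_measure_le_prog_general S ST T hST φ M hM hnv
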